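/- Let P ∈ ℝ^{n×k}, u ∈ ℝ^k, ε ≥ 0 and λ ≥ 0. If there do NOT exist v, r ∈ ℝ^n with ‖v‖_∞ ≤ λ, ‖r‖₂ ≤ ε, and P u = v + r, then the function w ↦ ε‖w‖₂ + λ‖w‖₁ − (P u)ᵀ w is unbounded below on ℝ^n. -/

import Mathlib

/-!
The points `v + r` with `‖v‖_∞ ≤ λ` and `‖r‖₂ ≤ ε` form a closed convex set `C` whose support
function is `w ↦ λ‖w‖₁ + ε‖w‖₂`. If `Pu ∉ C`, a separating hyperplane gives a direction `w` with
`λ‖w‖₁ + ε‖w‖₂ < (Pu)ᵀw`; the objective is positively homogeneous, so along the ray `t • w` it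
tends to `-∞`.
-/

open Matrix Pointwise

/-- Euclidean norm of a vector in `ℝ^n`. -/
noncomputable def norm2 {n : ℕ} (x : Fin n → ℝ) : ℝ := Real.sqrt (∑ i, x i ^ 2)

/-- ℓ1 norm of a vector in `ℝ^n`. -/
noncomputable def norm1 {n : ℕ} (x : Fin n → ℝ) : ℝ := ∑ i, |x i|

/-- Sup (ℓ∞) norm of a vector in `ℝ^n`. -/
noncomputable def normInf {n : ℕ} (x : Fin n → ℝ) : ℝ := ⨆ i, |x i|

theorem exists_forall_dotProduct_lt_of_notMem {ι : Type*} [Fintype ι] {C : Set (ι → ℝ)}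
    (hconv : Convex ℝ C) (hclosed : IsClosed C) {c : ι → ℝ} (hc : c ∉ C) :
    ∃ w : ι → ℝ, ∀ x ∈ C, x ⬝ᵥ w < c ⬝ᵥ w := by
  classical
  obtain ⟨f, s, hfC, hfc⟩ := geometric_hahn_banach_closed_point hconv hclosed hc
  have hf : ∀ x, f x = x ⬝ᵥ (dotProductEquiv ℝ ι).symm f.toLinearMap := fun x => by
    rw [dotProduct_comm, ← dotProductEquiv_apply_apply, LinearEquiv.apply_symm_apply]
    rfl
  exact ⟨_, fun x hx => hf x ▸ hf c ▸ (hfC x hx).trans hfc⟩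

section Norms

variable {n : ℕ}

theorem norm2_eq_norm_toLp (x : Fin n → ℝ) :
    norm2 x = ‖(EuclideanSpace.equiv (Fin n) ℝ).symm x‖ := by
  simp [norm2, EuclideanSpace.norm_eq]

theorem norm2_nonneg (x : Fin n → ℝ) : 0 ≤ norm2 x := Real.sqrt_nonneg _

theorem norm2_smul (t : ℝ) (x : Fin n → ℝ) : norm2 (t • x) = |t| * norm2 x := by
  rw [norm2_eq_norm_toLp, norm2_eq_norm_toLp, map_smul, norm_smul, Real.norm_eq_abs]

theorem norm1_smul (t : ℝ) (x : Fin n → ℝ) : norm1 (t • x) = |t| * norm1 x := by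
  simp [norm1, Finset.mul_sum, abs_mul]

theorem norm2_sq (x : Fin n → ℝ) : norm2 x ^ 2 = x ⬝ᵥ x := by
  rw [norm2, Real.sq_sqrt (Finset.sum_nonneg fun i _ => sq_nonneg (x i))]
  simp [dotProduct, sq]

theorem normInf_le_iff {lam : ℝ} (hlam : 0 ≤ lam) (v : Fin n → ℝ) :
    normInf v ≤ lam ↔ ‖v‖ ≤ lam := by
  rw [pi_norm_le_iff_of_nonneg hlam]
  exact ⟨fun h i => (le_ciSup (Finite.bddAbove_range _) i).trans h,
    fun h => Real.iSup_le h hlam⟩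

end Norms

section DualFeasibleSet

variable {n : ℕ}

variable (n) in
def dualFeasibleSet (lam ε : ℝ) : Set (Fin n → ℝ) :=
  Metric.closedBall 0 lam + {r | norm2 r ≤ ε}

theorem setOf_norm2_le_eq_preimage (ε : ℝ) :
    {r : Fin n → ℝ | norm2 r ≤ ε} =
      (EuclideanSpace.equiv (Fin n) ℝ).symm ⁻¹' Metric.closedBall 0 ε := by
  ext r
  simp [norm2_eq_norm_toLp]

theorem convex_dualFeasibleSet (lam ε : ℝ) : Convex ℝ (dualFeasibleSet n lam ε) := by
  refine (convex_closedBall 0 lam).add ?_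
  rw [setOf_norm2_le_eq_preimage]
  exact (convex_closedBall 0 ε).linear_preimage (EuclideanSpace.equiv (Fin n) ℝ).symm.toLinearMap

theorem isClosed_dualFeasibleSet (lam ε : ℝ) : IsClosed (dualFeasibleSet n lam ε) := by
  refine IsClosed.add_left_of_isCompact ?_ (isCompact_closedBall 0 lam)
  rw [setOf_norm2_le_eq_preimage]
  exact Metric.isClosed_closedBall.preimage (EuclideanSpace.equiv (Fin n) ℝ).symm.continuous

theorem mem_dualFeasibleSet_iff {lam ε : ℝ} (hlam : 0 ≤ lam) {x : Fin n → ℝ} :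
    x ∈ dualFeasibleSet n lam ε ↔
      ∃ v r : Fin n → ℝ, normInf v ≤ lam ∧ norm2 r ≤ ε ∧ x = v + r := by
  simp only [dualFeasibleSet, Set.mem_add, mem_closedBall_zero_iff, Set.mem_ofPred_eq,
    normInf_le_iff hlam, eq_comm (a := x)]
  tauto

theorem exists_mem_dualFeasibleSet_dotProduct_eq {lam ε : ℝ} (hlam : 0 ≤ lam) (hε : 0 ≤ ε)
    (w : Fin n → ℝ) :
    ∃ x ∈ dualFeasibleSet n lam ε, x ⬝ᵥ w = lam * norm1 w + ε * norm2 w := by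
  set v : Fin n → ℝ := lam • fun i => (SignType.sign (w i) : ℝ)
  set r : Fin n → ℝ := (ε / norm2 w) • w
  have hv : ‖v‖ ≤ lam := by
    refine (pi_norm_le_iff_of_nonneg hlam).2 fun i => ?_
    simp only [v, Pi.smul_apply, smul_eq_mul, Real.norm_eq_abs, abs_mul, abs_of_nonneg hlam]
    refine mul_le_of_le_one_right hlam ?_
    cases SignType.sign (w i) <;> simp
  have hr : norm2 r ≤ ε := by
    rw [norm2_smul, abs_of_nonneg (div_nonneg hε (norm2_nonneg w))]
    rcases eq_or_ne (norm2 w) 0 with h | h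
    · simp [h, hε]
    · rw [div_mul_cancel₀ _ h]
  have hvw : v ⬝ᵥ w = lam * norm1 w := by
    simp [v, norm1, dotProduct, Finset.mul_sum, mul_assoc, sign_mul_self]
  have hrw : r ⬝ᵥ w = ε * norm2 w := by
    rw [smul_dotProduct, ← norm2_sq, smul_eq_mul]
    rcases eq_or_ne (norm2 w) 0 with h | h
    · simp [h]
    · field_simp
  exact ⟨v + r, Set.add_mem_add (mem_closedBall_zero_iff.2 hv) hr, by rw [add_dotProduct, hvw, hrw]⟩

end DualFeasibleSet

section DualObjective

variable {n : ℕ}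

noncomputable def dualObjective (ε lam : ℝ) (c w : Fin n → ℝ) : ℝ :=
  ε * norm2 w + lam * norm1 w - c ⬝ᵥ w

theorem dualObjective_smul (ε lam : ℝ) (c w : Fin n → ℝ) {t : ℝ} (ht : 0 ≤ t) :
    dualObjective ε lam c (t • w) = t * dualObjective ε lam c w := by
  rw [dualObjective, dualObjective, norm2_smul, norm1_smul, dotProduct_smul, abs_of_nonneg ht,
    smul_eq_mul]
  ring

theorem exists_dualObjective_lt_of_neg {ε lam : ℝ} {c w : Fin n → ℝ}
    (hw : dualObjective ε lam c w < 0) (M : ℝ) : ∃ w', dualObjective ε lam c w' < M := by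
  have hray : Filter.Tendsto (fun t => t * dualObjective ε lam c w) Filter.atTop Filter.atBot :=
    Filter.tendsto_id.atTop_mul_const_of_neg hw
  obtain ⟨t, htM, ht⟩ :=
    ((hray.eventually_lt_atBot M).and (Filter.eventually_ge_atTop 0)).exists
  exact ⟨t • w, (dualObjective_smul ε lam c w ht).trans_lt htM⟩

end DualObjective

/-- If there is no decomposition `Pu = v + r` with `‖v‖_∞ ≤ λ` and `‖r‖₂ ≤ ε`, then
`w ↦ ε‖w‖₂ + λ‖w‖₁ − (Pu)ᵀw` is unbounded below. -/
theorem dual_function_f2_unbounded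
    {n k : ℕ} (P : Matrix (Fin n) (Fin k) ℝ) (u : Fin k → ℝ)
    (ε lam : ℝ) (hε : 0 ≤ ε) (hlam : 0 ≤ lam)
    (hinfeas : ¬ ∃ v r : Fin n → ℝ, normInf v ≤ lam ∧ norm2 r ≤ ε ∧ P.mulVec u = v + r) :
    ∀ M : ℝ, ∃ w : Fin n → ℝ,
      ε * norm2 w + lam * norm1 w - P.mulVec u ⬝ᵥ w < M := by
  have hnotMem : P.mulVec u ∉ dualFeasibleSet n lam ε :=
    fun h => hinfeas ((mem_dualFeasibleSet_iff hlam).1 h)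
  obtain ⟨w, hsep⟩ := exists_forall_dotProduct_lt_of_notMem (convex_dualFeasibleSet lam ε)
    (isClosed_dualFeasibleSet lam ε) hnotMem
  obtain ⟨x, hx, hxw⟩ := exists_mem_dualFeasibleSet_dotProduct_eq hlam hε w
  have hneg : dualObjective ε lam (P.mulVec u) w < 0 := by
    have := hsep x hx
    rw [dualObjective]
    linarith
  exact exists_dualObjective_lt_of_neg hneg
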